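/- arXiv:1410.4468 — 8 statements merged into one kernel-verified Lean document; each statement's English description precedes it below -/
import Mathlib

section
/- In the toy market with buy bid A (11 MW at limit price 50), buy bid B (14 MW at limit price 10), indivisible sell block bid C (10 MW at limit price 5), and indivisible sell block bid D (20 MW at limit price 10), no uniform-price market equilibrium exists: there is no price π and feasible execution (with each block bid fully executed or fully rejected, buy bids executed at fractions in [0,1], total bought power equals total sold power) such that every in-the-money bid is fully executed, every out-of-the-money bid is fully rejected, and every fractionally executed bid has limit price equal to π. -/
/-- In the toy market (buy A: 11 MW @ 50, buy B: 14 MW @ 10,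
sell block C: 10 MW @ 5, sell block D: 20 MW @ 10), no uniform-price
market equilibrium exists. -/
theorem stmt0 :
    ¬ ∃ (π a b yC yD : ℝ),
      -- buy bids executed at fractions in [0,1]
      0 ≤ a ∧ a ≤ 1 ∧ 0 ≤ b ∧ b ≤ 1 ∧
      -- block bids fully executed or fully rejected
      (yC = 0 ∨ yC = 1) ∧ (yD = 0 ∨ yD = 1) ∧
      -- market balance: bought power = sold power
      11 * a + 14 * b = 10 * yC + 20 * yD ∧
      -- buy bid A (limit 50): ITM fully executed, OTM rejected, fractional ⇒ ATM
      ((50 : ℝ) > π → a = 1) ∧ ((50 : ℝ) < π → a = 0) ∧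
      (0 < a → a < 1 → (50 : ℝ) = π) ∧
      -- buy bid B (limit 10)
      ((10 : ℝ) > π → b = 1) ∧ ((10 : ℝ) < π → b = 0) ∧
      (0 < b → b < 1 → (10 : ℝ) = π) ∧
      -- sell block C (limit 5): ITM fully executed, OTM rejected
      ((5 : ℝ) < π → yC = 1) ∧ ((5 : ℝ) > π → yC = 0) ∧
      -- sell block D (limit 10)
      ((10 : ℝ) < π → yD = 1) ∧ ((10 : ℝ) > π → yD = 0) := by

  rintro ⟨π, a, b, yC, yD, ha0, ha1, hb0, hb1, hC, hD, hbal,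
    hA1, hA2, hA3, hB1, hB2, hB3, hC1, hC2, hD1, hD2⟩
  rcases hC with hC | hC <;> rcases hD with hD | hD <;> subst hC <;> subst hD
  · -- yC = 0, yD = 0: a = b = 0, so π ≥ 50 ≥ 10 forces yD = 1
    have ha : a = 0 := by nlinarith
    have hπ : ¬ (50 : ℝ) > π := fun h => by simp [hA1 h] at ha
    have := hD1 (by linarith [not_lt.mp hπ])
    norm_num at this
  · -- yC = 0, yD = 1: π ≤ 5, so a = 1, b = 1, balance fails
    have hπ : ¬ (5 : ℝ) < π := fun h => by simpa using hC1 h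
    have ha : a = 1 := hA1 (by linarith [not_lt.mp hπ])
    have hb : b = 1 := hB1 (by linarith [not_lt.mp hπ])
    rw [ha, hb] at hbal; norm_num at hbal
  · -- yC = 1, yD = 0: 5 ≤ π ≤ 10, so a = 1, then 11 + 14b = 10 impossible
    have hπ1 : ¬ (5 : ℝ) > π := fun h => by simpa using hC2 h
    have hπ2 : ¬ (10 : ℝ) < π := fun h => by simpa using hD1 h
    have ha : a = 1 := hA1 (by linarith [not_lt.mp hπ2])
    rw [ha] at hbal; nlinarith
  · -- yC = 1, yD = 1: need 11a + 14b = 30 > 25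
    nlinarith
end

section
/- Let j be a block bid with y_j = 0 (rejected). If the complementarity condition s_j(1 − y_j) = 0 holds (hence s_j = 0), and the dual feasibility condition s_j + d^r_j + Σ_t P^t_j π_{l(j),t} ≥ Σ_t P^t_j λ^j holds with d^r_j ≥ 0, then d^r_j ≥ max(0, Σ_t P^t_j(λ^j − π_{l(j),t})), i.e., d^r_j upper-bounds the opportunity cost of the paradoxically rejected block bid j. -/
/-- Lemma 1(ii): for a rejected block bid `j` (`y = 0`), the complementarity condition
`s·(1 − y) = 0` (forcing `s = 0`) and dual feasibility
`s + dʳ + Σₜ Pᵗ πₜ ≥ Σₜ Pᵗ λ` with `dʳ ≥ 0` imply that `dʳ` upper-bounds the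
opportunity cost `max(0, Σₜ Pᵗ(λ − πₜ))` of the paradoxically rejected bid. -/
theorem stmt4 (n : ℕ) (P π : Fin n → ℝ) (lam y s dr : ℝ)
    (hy : y = 0) (hs : 0 ≤ s) (hdr : 0 ≤ dr)
    (hcs : s * (1 - y) = 0)
    (hdual : s + dr + ∑ t, P t * π t ≥ ∑ t, P t * lam) :
    dr ≥ max 0 (∑ t, P t * (lam - π t)) := by
  subst hy
  simp at hcs
  subst hcs
  rw [ge_iff_le, max_le_iff]
  refine ⟨hdr, ?_⟩
  have : ∑ t, P t * (lam - π t) = ∑ t, P t * lam - ∑ t, P t * π t := by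
    rw [← Finset.sum_sub_distrib]; congr 1; ext t; ring
  linarith [hdual]
end

section
/- Let c be a MIC (minimum income condition) order with hourly suborders h ∈ H_c, each with power P_{hc}, limit price λ^{hc}, price π_{l(hc),t(hc)}, and dual potential-surplus variables s_{hc} ≥ 0 satisfying s_{hc} + P_{hc}·π_{l(hc),t(hc)} ≥ P_{hc}·λ^{hc}. Suppose c is rejected (u_c = 0), the complementarity condition s_c(1 − u_c) = 0 holds (hence s_c = 0), and the dual constraint s_c + du^r_c ≥ Σ_{h ∈ H_c} s_{hc} holds. Then du^r_c ≥ Σ_{h ∈ H_c} max(0, P_{hc}(λ^{hc} − π_{l(hc),t(hc)})): the multiplier du^r_c upper-bounds the total maximum missed hourly surpluses of the rejected MIC order. -/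
/-- Lemma 2(i): for a rejected MIC order `c` (`u = 0`), the multiplier `duʳ` of the
rejection-fixing constraint upper-bounds the sum of the maximum missed hourly
surpluses `Σ_h max(0, P_h(λ_h − π_h))` of its hourly suborders. -/
theorem stmt5 (nH : ℕ) (P lam π sH : Fin nH → ℝ) (u sc dur : ℝ)
    (hsH : ∀ h, 0 ≤ sH h)
    (hdualH : ∀ h, sH h + P h * π h ≥ P h * lam h)
    (hu : u = 0) (hsc : 0 ≤ sc)
    (hcs : sc * (1 - u) = 0)
    (hdualC : sc + dur ≥ ∑ h, sH h) :
    dur ≥ ∑ h, max 0 (P h * (lam h - π h)) := by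
  have hsc0 : sc = 0 := by simpa [hu] using hcs
  have hsum : (∑ h, max 0 (P h * (lam h - π h))) ≤ ∑ h, sH h := by
    apply Finset.sum_le_sum
    intro h _
    have := hdualH h
    have : P h * (lam h - π h) ≤ sH h := by ring_nf; ring_nf at this; linarith
    exact max_le (hsH h) this
  calc (∑ h, max 0 (P h * (lam h - π h))) ≤ ∑ h, sH h := hsum
    _ ≤ sc + dur := hdualC
    _ = dur := by rw [hsc0]; ring
end

section
/- Exact linearization of income (accepted MIC bid, single suborder version): let x ∈ [0,1] with x ≤ u, u = 1, suppose the dual feasibility s_h + P·π ≥ P·λ holds with s_h ≥ 0, together with complementarity x·(s_h + P·π − P·λ) = 0 and s_h·(u − x) = 0. Then (P x)·π = (P λ)·x − s_h, i.e., the quadratic income term (P x)π equals a linear expression in x and s_h. -/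
/-- Exact linearization of the income of a suborder of an accepted MIC bid
(identity (63) in the proof of Lemma 3): under primal feasibility, dual
feasibility and the complementarity conditions, the quadratic income term
`(P x)·π` equals the linear expression `(P λ)·x − s`. -/
theorem stmt8 (P lam π x u s : ℝ)
    (hx0 : 0 ≤ x) (hxu : x ≤ u) (hu : u = 1)
    (hdual : s + P * π ≥ P * lam) (hs : 0 ≤ s)
    (hcsx : x * (s + P * π - P * lam) = 0)
    (hcss : s * (u - x) = 0) :
    (P * x) * π = (P * lam) * x - s := by
  subst hu
  have h1 : s = s * x := by linarith [hcss, mul_sub s 1 x, mul_one s]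
  nlinarith [hcsx, h1]
end

section
/- Exact linearization of the minimum income condition (Lemma 3): for every MIC bid c in a feasible point of UMFS (i.e., a point satisfying primal feasibility, dual feasibility, and all complementarity conditions (32)–(46), with du^a_c = 0), the total income satisfies Σ_{h ∈ H_c} (P_{hc} x_{hc}) π_{l(hc),t(hc)} = Σ_{h ∈ H_c} (P_{hc} λ^{hc}) x_{hc} − s_c. Consequently the nonlinear minimum income condition u_c = 1 ⟹ Σ_h (−P_{hc} x_{hc}) π ≥ F_c + Σ_h (−P_{hc} x_{hc}) V_c is equivalent to the linear constraint s_c − Σ_h (P_{hc} λ^{hc}) x_{hc} ≥ F_c + Σ_h (−P_{hc} x_{hc}) V_c − F_c(1 − u_c). -/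
/-- Lemma 3 and the exact linearization of the minimum income condition: for a MIC bid
`c` (with hourly suborders indexed by `Fin n`) in a feasible point of UMFS (primal
feasibility, dual feasibility and all relevant complementarity conditions, with
`duᵃ_c = 0`), the income identity
`Σ_h (P_h x_h) π_h = Σ_h (P_h λ_h) x_h − s_c` holds; consequently the nonlinear
minimum income condition is equivalent to the linear constraint
`s_c − Σ_h (P_h λ_h) x_h ≥ F + (Σ_h −P_h x_h) V − F (1 − u)`. -/
theorem stmt9 (n : ℕ) (P lam π x sH : Fin n → ℝ) (u sc dur F V : ℝ)
    (hu : u = 0 ∨ u = 1)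
    (hx : ∀ h, 0 ≤ x h ∧ x h ≤ u)
    (hsH : ∀ h, 0 ≤ sH h) (hsc : 0 ≤ sc) (hdur : 0 ≤ dur)
    (hdualH : ∀ h, sH h + P h * π h ≥ P h * lam h)
    (hdualC : sc + dur ≥ ∑ h, sH h)
    (hcsC : sc * (1 - u) = 0)
    (hcsH : ∀ h, sH h * (u - x h) = 0)
    (hcsx : ∀ h, x h * (sH h + P h * π h - P h * lam h) = 0)
    (hcsU : u * (sc + dur - ∑ h, sH h) = 0)
    (hcsdur : u * dur = 0) :
    (∑ h, (P h * x h) * π h = ∑ h, (P h * lam h) * x h - sc) ∧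
    ((u = 1 → ∑ h, (-(P h * x h)) * π h ≥ F + (∑ h, -(P h * x h)) * V) ↔
      sc - ∑ h, (P h * lam h) * x h ≥ F + (∑ h, -(P h * x h)) * V - F * (1 - u)) := by
  have key : ∑ h, (P h * x h) * π h = ∑ h, (P h * lam h) * x h - sc := by
    rcases hu with h0 | h1
    · have hx0 : ∀ h, x h = 0 := fun h =>
        le_antisymm (by simpa [h0] using (hx h).2) (hx h).1
      have hsc0 : sc = 0 := by have := hcsC; rw [h0] at this; linarith
      simp [hx0, hsc0]
    · subst h1
      have hdur0 : dur = 0 := by linarith [hcsdur]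
      have hscsum : sc = ∑ h, sH h := by have := hcsU; linarith
      have hpt : ∀ h, (P h * x h) * π h = (P h * lam h) * x h - sH h := by
        intro h
        linear_combination hcsx h + hcsH h
      rw [Finset.sum_congr rfl fun h _ => hpt h, Finset.sum_sub_distrib, hscsum]
  refine ⟨key, ?_⟩
  have hneg : ∑ h, (-(P h * x h)) * π h = sc - ∑ h, (P h * lam h) * x h := by
    have : ∑ h, (-(P h * x h)) * π h = -∑ h, (P h * x h) * π h := by
      rw [← Finset.sum_neg_distrib]; exact Finset.sum_congr rfl fun h _ => by ring
    rw [this, key]; ring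
  rcases hu with h0 | h1
  · have hx0 : ∀ h, x h = 0 := fun h =>
      le_antisymm (by simpa [h0] using (hx h).2) (hx h).1
    have hsc0 : sc = 0 := by have := hcsC; rw [h0] at this; linarith
    constructor
    · intro _; simp [hx0, hsc0, h0]
    · intro _ hu1; rw [h0] at hu1; norm_num at hu1
  · subst h1
    rw [hneg]
    constructor
    · intro h; have := h rfl; linarith
    · intro h _; linarith
end

section
/- Theorem 1 (I), projection direction: let (x, y, u, n, π, v, s, d^a, d^r, du^a, du^r) be a feasible point of UMFS with prices in the range [−π̄, π̄], and define J_r = {j : y_j = 0}, J_a = {j : y_j = 1}, C_r = {c : u_c = 0}, C_a = {c : u_c = 1}. Then the big-M constraints d^r_j ≤ M_j(1 − y_j), d^a_j ≤ M_j y_j, du^r_c ≤ M_c(1 − u_c), du^a_c = 0 force d^r_j = 0 for j ∈ J_a, d^a_j = 0 for j ∈ J_r, du^r_c = 0 for c ∈ C_a, and the strong-duality inequality Σ_i (λ^i P_i)x_i + Σ_{c,h}(λ^{hc}P_{hc})x_{hc} + Σ_{j,t}(λ^j P^t_j)y_j ≥ Σ_i s_i + Σ_j s_j + Σ_c s_c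 − Σ_j d^a_j + Σ_m w_m v_m then implies equality of the primal objective and the dual objective of the fixed-selection LP, hence (by Observation 1) all complementarity conditions (32)–(46) hold for the projected point. -/
open Finset

/-- Market data for the PCR day-ahead auction: hourly bids `Fin nI`, block bids
`Fin nJ`, MIC bids `Fin nC` with hourly suborders `Fin nH` (mapped to their MIC bid
by `toC`), location/time slots `Fin nLT`, net-position variables `Fin nK` and
abstract linear network constraints `Fin nM`. Powers `P` are signed (`P > 0` for
demand, `P < 0` for supply). -/
structure Market (nI nJ nC nH nLT nK nM : ℕ) where
  toC : Fin nH → Fin nC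
  ltI : Fin nI → Fin nLT
  PI : Fin nI → ℝ
  lamI : Fin nI → ℝ
  PJ : Fin nJ → Fin nLT → ℝ
  lamJ : Fin nJ → ℝ
  ltH : Fin nH → Fin nLT
  PH : Fin nH → ℝ
  lamH : Fin nH → ℝ
  e : Fin nK → Fin nLT → ℝ
  a : Fin nM → Fin nK → ℝ
  w : Fin nM → ℝ

/-- A primal-dual point: execution fractions `x, xh`, block/MIC acceptance variables
`y, u`, net positions `np`, prices `price`, network duals `v`, surplus variables
`sI, sJ, sC, sH` and fixing multipliers `da, dr, dua, dur`. -/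
structure Point (nI nJ nC nH nLT nK nM : ℕ) where
  x : Fin nI → ℝ
  xh : Fin nH → ℝ
  y : Fin nJ → ℝ
  u : Fin nC → ℝ
  np : Fin nK → ℝ
  price : Fin nLT → ℝ
  v : Fin nM → ℝ
  sI : Fin nI → ℝ
  sJ : Fin nJ → ℝ
  sC : Fin nC → ℝ
  sH : Fin nH → ℝ
  da : Fin nJ → ℝ
  dr : Fin nJ → ℝ
  dua : Fin nC → ℝ
  dur : Fin nC → ℝ

variable {nI nJ nC nH nLT nK nM : ℕ}

/-- Welfare (primal objective). -/
def primalObj (M : Market nI nJ nC nH nLT nK nM) (p : Point nI nJ nC nH nLT nK nM) : ℝ :=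
  ∑ i, M.lamI i * M.PI i * p.x i + ∑ h, M.lamH h * M.PH h * p.xh h
    + ∑ j, (∑ lt, M.lamJ j * M.PJ j lt) * p.y j

/-- Sum of all bid surpluses plus congestion rents. -/
def surplusSum (M : Market nI nJ nC nH nLT nK nM) (p : Point nI nJ nC nH nLT nK nM) : ℝ :=
  ∑ i, p.sI i + ∑ j, p.sJ j + ∑ c, p.sC c + ∑ m, M.w m * p.v m

/-- Dual objective adjusted by the compensations `dᵃ` to paradoxically accepted blocks. -/
def dualObjAdj (M : Market nI nJ nC nH nLT nK nM) (p : Point nI nJ nC nH nLT nK nM) : ℝ :=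
  surplusSum M p - ∑ j, p.da j

/-- Primal feasibility: constraints (27)-(31). -/
def PrimalFeas (M : Market nI nJ nC nH nLT nK nM) (p : Point nI nJ nC nH nLT nK nM) : Prop :=
  (∀ i, 0 ≤ p.x i ∧ p.x i ≤ 1) ∧
  (∀ j, 0 ≤ p.y j ∧ p.y j ≤ 1) ∧
  (∀ h, 0 ≤ p.xh h ∧ p.xh h ≤ p.u (M.toC h)) ∧
  (∀ c, 0 ≤ p.u c ∧ p.u c ≤ 1) ∧
  (∀ lt, (∑ i, if M.ltI i = lt then M.PI i * p.x i else 0)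
       + (∑ j, M.PJ j lt * p.y j)
       + (∑ h, if M.ltH h = lt then M.PH h * p.xh h else 0)
       = ∑ k, M.e k lt * p.np k) ∧
  (∀ m, ∑ k, M.a m k * p.np k ≤ M.w m)

/-- Integrality of block and MIC acceptance variables. -/
def Integral (p : Point nI nJ nC nH nLT nK nM) : Prop :=
  (∀ j, p.y j = 0 ∨ p.y j = 1) ∧ (∀ c, p.u c = 0 ∨ p.u c = 1)

/-- Dual feasibility: constraints (19)-(25) / (33)-(37) and (43) with nonnegativity. -/
def DualFeas (M : Market nI nJ nC nH nLT nK nM) (p : Point nI nJ nC nH nLT nK nM) : Prop :=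
  (∀ i, 0 ≤ p.sI i) ∧ (∀ j, 0 ≤ p.sJ j) ∧ (∀ c, 0 ≤ p.sC c) ∧ (∀ h, 0 ≤ p.sH h) ∧
  (∀ j, 0 ≤ p.da j ∧ 0 ≤ p.dr j) ∧ (∀ c, 0 ≤ p.dua c ∧ 0 ≤ p.dur c) ∧
  (∀ m, 0 ≤ p.v m) ∧
  (∀ i, p.sI i + M.PI i * p.price (M.ltI i) ≥ M.PI i * M.lamI i) ∧
  (∀ h, p.sH h + M.PH h * p.price (M.ltH h) ≥ M.PH h * M.lamH h) ∧
  (∀ j, p.sJ j + p.dr j - p.da j + ∑ lt, M.PJ j lt * p.price lt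
        ≥ ∑ lt, M.PJ j lt * M.lamJ j) ∧
  (∀ c, p.sC c + p.dur c - p.dua c ≥ ∑ h, if M.toC h = c then p.sH h else 0) ∧
  (∀ k, ∑ m, M.a m k * p.v m - ∑ lt, M.e k lt * p.price lt = 0)

/-- Big-M dispatch constraints (38)-(41) of UMFS, with `duᵃ = 0` (Lemma 2(ii)). -/
def BigMDisp (MJ : Fin nJ → ℝ) (MC : Fin nC → ℝ) (p : Point nI nJ nC nH nLT nK nM) : Prop :=
  (∀ j, p.dr j ≤ MJ j * (1 - p.y j)) ∧
  (∀ j, p.da j ≤ MJ j * p.y j) ∧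
  (∀ c, p.dur c ≤ MC c * (1 - p.u c)) ∧
  (∀ c, p.dua c = 0)

/-- The Uniform Market Clearing Feasible Set (UMFS), constraints (26)-(43):
primal feasibility, integrality, dual feasibility, big-M dispatch constraints,
and the strong-duality (objective equality) inequality (26). -/
def UMFS (M : Market nI nJ nC nH nLT nK nM) (MJ : Fin nJ → ℝ) (MC : Fin nC → ℝ)
    (p : Point nI nJ nC nH nLT nK nM) : Prop :=
  PrimalFeas M p ∧ Integral p ∧ DualFeas M p ∧ BigMDisp MJ MC p ∧
  primalObj M p ≥ dualObjAdj M p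

/-- Complementarity conditions (32)-(46). -/
def CompSlack (M : Market nI nJ nC nH nLT nK nM) (p : Point nI nJ nC nH nLT nK nM) : Prop :=
  (∀ i, p.sI i * (1 - p.x i) = 0) ∧
  (∀ j, p.sJ j * (1 - p.y j) = 0) ∧
  (∀ h, p.sH h * (p.u (M.toC h) - p.xh h) = 0) ∧
  (∀ c, p.sC c * (1 - p.u c) = 0) ∧
  (∀ m, p.v m * (M.w m - ∑ k, M.a m k * p.np k) = 0) ∧
  (∀ j, (1 - p.y j) * p.da j = 0) ∧
  (∀ j, p.y j * p.dr j = 0) ∧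
  (∀ c, (1 - p.u c) * p.dua c = 0) ∧
  (∀ c, p.u c * p.dur c = 0) ∧
  (∀ i, p.x i * (p.sI i + M.PI i * p.price (M.ltI i) - M.PI i * M.lamI i) = 0) ∧
  (∀ h, p.xh h * (p.sH h + M.PH h * p.price (M.ltH h) - M.PH h * M.lamH h) = 0) ∧
  (∀ j, p.y j * (p.sJ j + p.dr j - p.da j
        + ∑ lt, M.PJ j lt * (p.price lt - M.lamJ j)) = 0) ∧
  (∀ c, p.u c * (p.sC c + p.dur c - p.dua c
        - ∑ h, if M.toC h = c then p.sH h else 0) = 0)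

/-- Linearized minimum income conditions (55). -/
def MICLin (M : Market nI nJ nC nH nLT nK nM) (F V : Fin nC → ℝ)
    (p : Point nI nJ nC nH nLT nK nM) : Prop :=
  ∀ c, p.sC c - ∑ h, (if M.toC h = c then M.lamH h * M.PH h * p.xh h else 0)
    ≥ F c + (∑ h, if M.toC h = c then -(M.PH h * p.xh h) else 0) * V c
        - F c * (1 - p.u c)

/-- UMFS together with the linearized MIC constraints. -/
def UMFS2 (M : Market nI nJ nC nH nLT nK nM) (MJ : Fin nJ → ℝ) (MC : Fin nC → ℝ)
    (F V : Fin nC → ℝ) (p : Point nI nJ nC nH nLT nK nM) : Prop :=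
  UMFS M MJ MC p ∧ MICLin M F V p

/-- Theorem 1 (I), projection direction: for any feasible point of UMFS with prices in
`[−π̄, π̄]`, the big-M constraints force `dʳ_j = 0` for accepted blocks, `dᵃ_j = 0` for
rejected blocks and `duʳ_c = 0` for accepted MIC bids, the strong-duality inequality
holds with equality (primal objective = dual objective of the fixed-selection LP),
and hence all complementarity conditions (32)-(46) hold. -/
theorem stmt11 (M : Market nI nJ nC nH nLT nK nM) (MJ : Fin nJ → ℝ) (MC : Fin nC → ℝ)
    (pibar : ℝ) (p : Point nI nJ nC nH nLT nK nM)
    (hp : UMFS M MJ MC p)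
    (hprice : ∀ lt, |p.price lt| ≤ pibar) :
    (∀ j, p.y j = 1 → p.dr j = 0) ∧
    (∀ j, p.y j = 0 → p.da j = 0) ∧
    (∀ c, p.u c = 1 → p.dur c = 0) ∧
    primalObj M p = dualObjAdj M p ∧
    CompSlack M p := by
  obtain ⟨hPF, hInt, hDF, hBM, hObj⟩ := hp
  obtain ⟨hx, hy, hxh, hu, hbal, hnet⟩ := hPF
  obtain ⟨hyI, huI⟩ := hInt
  obtain ⟨hsI, hsJ, hsC, hsH, hd, hdu, hv, dI, dH, dJ, dC, dK⟩ := hDF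
  obtain ⟨bm1, bm2, bm3, bm4⟩ := hBM
  -- Part 1: big-M consequences
  have hdr0 : ∀ j, p.y j = 1 → p.dr j = 0 := by
    intro j hj
    have h1 := bm1 j
    rw [hj] at h1
    norm_num at h1
    exact le_antisymm h1 (hd j).2
  have hda0 : ∀ j, p.y j = 0 → p.da j = 0 := by
    intro j hj
    have h1 := bm2 j
    rw [hj] at h1
    norm_num at h1
    exact le_antisymm h1 (hd j).1
  have hdur0 : ∀ c, p.u c = 1 → p.dur c = 0 := by
    intro c hc
    have h1 := bm3 c
    rw [hc] at h1
    norm_num at h1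
    exact le_antisymm h1 (hdu c).2
  -- termwise nonnegativity of slack products
  have hAI : ∀ i, 0 ≤ p.sI i * (1 - p.x i) := fun i =>
    mul_nonneg (hsI i) (by linarith [(hx i).2])
  have hBI : ∀ i, 0 ≤ p.x i * (p.sI i + M.PI i * p.price (M.ltI i) - M.PI i * M.lamI i) :=
    fun i => mul_nonneg (hx i).1 (by have := dI i; linarith)
  have hAH : ∀ h, 0 ≤ p.sH h * (p.u (M.toC h) - p.xh h) := fun h =>
    mul_nonneg (hsH h) (by linarith [(hxh h).2])
  have hBH : ∀ h, 0 ≤ p.xh h * (p.sH h + M.PH h * p.price (M.ltH h) - M.PH h * M.lamH h) :=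
    fun h => mul_nonneg (hxh h).1 (by have := dH h; linarith)
  have hAJ : ∀ j, 0 ≤ p.sJ j * (1 - p.y j) := fun j =>
    mul_nonneg (hsJ j) (by linarith [(hy j).2])
  have hsubJ : ∀ j, ∑ lt, M.PJ j lt * (p.price lt - M.lamJ j)
      = (∑ lt, M.PJ j lt * p.price lt) - ∑ lt, M.lamJ j * M.PJ j lt := by
    intro j
    rw [← Finset.sum_sub_distrib]
    exact Finset.sum_congr rfl fun lt _ => by ring
  have hBJ : ∀ j, 0 ≤ p.y j * (p.sJ j + p.dr j - p.da j
      + ∑ lt, M.PJ j lt * (p.price lt - M.lamJ j)) := by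
    intro j
    refine mul_nonneg (hy j).1 ?_
    have h1 := dJ j
    have h2 : ∑ lt, M.PJ j lt * M.lamJ j = ∑ lt, M.lamJ j * M.PJ j lt :=
      Finset.sum_congr rfl fun lt _ => by ring
    rw [hsubJ j]
    rw [h2] at h1
    linarith
  have hAC : ∀ c, 0 ≤ p.sC c * (1 - p.u c) := fun c =>
    mul_nonneg (hsC c) (by linarith [(hu c).2])
  have hBC : ∀ c, 0 ≤ p.u c * (p.sC c + p.dur c - p.dua c
      - ∑ h, if M.toC h = c then p.sH h else 0) :=
    fun c => mul_nonneg (hu c).1 (by have := dC c; linarith)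
  have hAM : ∀ m, 0 ≤ p.v m * (M.w m - ∑ k, M.a m k * p.np k) := fun m =>
    mul_nonneg (hv m) (by linarith [hnet m])
  -- price/network identity
  have hL1 : ∑ lt, p.price lt * ∑ i, (if M.ltI i = lt then M.PI i * p.x i else 0)
      = ∑ i, M.PI i * p.x i * p.price (M.ltI i) := by
    calc ∑ lt, p.price lt * ∑ i, (if M.ltI i = lt then M.PI i * p.x i else 0)
        = ∑ lt, ∑ i, (if M.ltI i = lt then p.price lt * (M.PI i * p.x i) else 0) := by
          refine Finset.sum_congr rfl fun lt _ => ?_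
          rw [Finset.mul_sum]
          exact Finset.sum_congr rfl fun i _ => by rw [mul_ite, mul_zero]
      _ = ∑ i, ∑ lt, (if M.ltI i = lt then p.price lt * (M.PI i * p.x i) else 0) :=
          Finset.sum_comm
      _ = ∑ i, M.PI i * p.x i * p.price (M.ltI i) := by
          refine Finset.sum_congr rfl fun i _ => ?_
          rw [Finset.sum_ite_eq]
          simp [mul_comm]
  have hL3 : ∑ lt, p.price lt * ∑ h, (if M.ltH h = lt then M.PH h * p.xh h else 0)
      = ∑ h, M.PH h * p.xh h * p.price (M.ltH h) := by
    calc ∑ lt, p.price lt * ∑ h, (if M.ltH h = lt then M.PH h * p.xh h else 0)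
        = ∑ lt, ∑ h, (if M.ltH h = lt then p.price lt * (M.PH h * p.xh h) else 0) := by
          refine Finset.sum_congr rfl fun lt _ => ?_
          rw [Finset.mul_sum]
          exact Finset.sum_congr rfl fun h _ => by rw [mul_ite, mul_zero]
      _ = ∑ h, ∑ lt, (if M.ltH h = lt then p.price lt * (M.PH h * p.xh h) else 0) :=
          Finset.sum_comm
      _ = ∑ h, M.PH h * p.xh h * p.price (M.ltH h) := by
          refine Finset.sum_congr rfl fun h _ => ?_
          rw [Finset.sum_ite_eq]
          simp [mul_comm]
  have hL2 : ∑ lt, p.price lt * ∑ j, M.PJ j lt * p.y j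
      = ∑ j, p.y j * ∑ lt, M.PJ j lt * p.price lt := by
    calc ∑ lt, p.price lt * ∑ j, M.PJ j lt * p.y j
        = ∑ lt, ∑ j, p.price lt * (M.PJ j lt * p.y j) := by
          exact Finset.sum_congr rfl fun lt _ => Finset.mul_sum _ _ _
      _ = ∑ j, ∑ lt, p.price lt * (M.PJ j lt * p.y j) := Finset.sum_comm
      _ = ∑ j, p.y j * ∑ lt, M.PJ j lt * p.price lt := by
          refine Finset.sum_congr rfl fun j _ => ?_
          rw [Finset.mul_sum]
          exact Finset.sum_congr rfl fun lt _ => by ring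
  have hR : ∑ lt, p.price lt * ∑ k, M.e k lt * p.np k
      = ∑ m, p.v m * ∑ k, M.a m k * p.np k := by
    calc ∑ lt, p.price lt * ∑ k, M.e k lt * p.np k
        = ∑ lt, ∑ k, p.price lt * (M.e k lt * p.np k) :=
          Finset.sum_congr rfl fun lt _ => Finset.mul_sum _ _ _
      _ = ∑ k, ∑ lt, p.price lt * (M.e k lt * p.np k) := Finset.sum_comm
      _ = ∑ k, p.np k * ∑ lt, M.e k lt * p.price lt := by
          refine Finset.sum_congr rfl fun k _ => ?_
          rw [Finset.mul_sum]
          exact Finset.sum_congr rfl fun lt _ => by ring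
      _ = ∑ k, p.np k * ∑ m, M.a m k * p.v m := by
          refine Finset.sum_congr rfl fun k _ => ?_
          have := dK k
          have h2 : ∑ lt, M.e k lt * p.price lt = ∑ m, M.a m k * p.v m := by linarith
          rw [h2]
      _ = ∑ k, ∑ m, p.np k * (M.a m k * p.v m) :=
          Finset.sum_congr rfl fun k _ => Finset.mul_sum _ _ _
      _ = ∑ m, ∑ k, p.np k * (M.a m k * p.v m) := Finset.sum_comm
      _ = ∑ m, p.v m * ∑ k, M.a m k * p.np k := by
          refine Finset.sum_congr rfl fun m _ => ?_
          rw [Finset.mul_sum]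
          exact Finset.sum_congr rfl fun k _ => by ring
  have hE : (∑ i, M.PI i * p.x i * p.price (M.ltI i))
      + (∑ j, p.y j * ∑ lt, M.PJ j lt * p.price lt)
      + (∑ h, M.PH h * p.xh h * p.price (M.ltH h))
      = ∑ m, p.v m * ∑ k, M.a m k * p.np k := by
    have h1 : ∑ lt, p.price lt * ((∑ i, if M.ltI i = lt then M.PI i * p.x i else 0)
        + (∑ j, M.PJ j lt * p.y j)
        + (∑ h, if M.ltH h = lt then M.PH h * p.xh h else 0))
        = ∑ lt, p.price lt * ∑ k, M.e k lt * p.np k :=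
      Finset.sum_congr rfl fun lt _ => by rw [hbal lt]
    have h2 : ∑ lt, p.price lt * ((∑ i, if M.ltI i = lt then M.PI i * p.x i else 0)
        + (∑ j, M.PJ j lt * p.y j)
        + (∑ h, if M.ltH h = lt then M.PH h * p.xh h else 0))
        = (∑ lt, p.price lt * ∑ i, (if M.ltI i = lt then M.PI i * p.x i else 0))
          + (∑ lt, p.price lt * ∑ j, M.PJ j lt * p.y j)
          + (∑ lt, p.price lt * ∑ h, (if M.ltH h = lt then M.PH h * p.xh h else 0)) := by
      rw [← Finset.sum_add_distrib, ← Finset.sum_add_distrib]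
      exact Finset.sum_congr rfl fun lt _ => by ring
    rw [← hL1, ← hL2, ← hL3, ← hR, ← h2, h1]
  -- the MIC suborder link
  have hHC : ∑ h, p.sH h * p.u (M.toC h)
      = ∑ c, p.u c * ∑ h, (if M.toC h = c then p.sH h else 0) := by
    calc ∑ h, p.sH h * p.u (M.toC h)
        = ∑ h, ∑ c, (if M.toC h = c then p.u c * p.sH h else 0) := by
          refine Finset.sum_congr rfl fun h _ => ?_
          rw [Finset.sum_ite_eq]
          simp [mul_comm]
      _ = ∑ c, ∑ h, (if M.toC h = c then p.u c * p.sH h else 0) := Finset.sum_comm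
      _ = ∑ c, p.u c * ∑ h, (if M.toC h = c then p.sH h else 0) := by
          refine Finset.sum_congr rfl fun c _ => ?_
          rw [Finset.mul_sum]
          exact Finset.sum_congr rfl fun h _ => by rw [mul_ite, mul_zero]
  -- grouped identities
  have hTI : (∑ i, p.sI i * (1 - p.x i))
      + (∑ i, p.x i * (p.sI i + M.PI i * p.price (M.ltI i) - M.PI i * M.lamI i))
      = (∑ i, p.sI i) + (∑ i, M.PI i * p.x i * p.price (M.ltI i))
        - ∑ i, M.lamI i * M.PI i * p.x i := by
    rw [← Finset.sum_add_distrib, ← Finset.sum_add_distrib, ← Finset.sum_sub_distrib]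
    exact Finset.sum_congr rfl fun i _ => by ring
  have hTH : (∑ h, p.sH h * (p.u (M.toC h) - p.xh h))
      + (∑ h, p.xh h * (p.sH h + M.PH h * p.price (M.ltH h) - M.PH h * M.lamH h))
      = (∑ h, p.sH h * p.u (M.toC h)) + (∑ h, M.PH h * p.xh h * p.price (M.ltH h))
        - ∑ h, M.lamH h * M.PH h * p.xh h := by
    rw [← Finset.sum_add_distrib, ← Finset.sum_add_distrib, ← Finset.sum_sub_distrib]
    exact Finset.sum_congr rfl fun h _ => by ring
  have hTJ : (∑ j, p.sJ j * (1 - p.y j))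
      + (∑ j, p.y j * (p.sJ j + p.dr j - p.da j
          + ∑ lt, M.PJ j lt * (p.price lt - M.lamJ j)))
      = (∑ j, p.sJ j) - (∑ j, p.da j)
        + (∑ j, p.y j * ∑ lt, M.PJ j lt * p.price lt)
        - ∑ j, (∑ lt, M.lamJ j * M.PJ j lt) * p.y j := by
    rw [← Finset.sum_add_distrib, ← Finset.sum_sub_distrib, ← Finset.sum_add_distrib,
      ← Finset.sum_sub_distrib]
    refine Finset.sum_congr rfl fun j _ => ?_
    rw [hsubJ j]
    rcases hyI j with h | h
    · rw [h, hda0 j h]; ring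
    · rw [h, hdr0 j h]; ring
  have hTC : (∑ c, p.sC c * (1 - p.u c))
      + (∑ c, p.u c * (p.sC c + p.dur c - p.dua c
          - ∑ h, if M.toC h = c then p.sH h else 0))
      = (∑ c, p.sC c) - ∑ c, p.u c * ∑ h, (if M.toC h = c then p.sH h else 0) := by
    rw [← Finset.sum_add_distrib, ← Finset.sum_sub_distrib]
    refine Finset.sum_congr rfl fun c _ => ?_
    rw [bm4 c]
    rcases huI c with h | h
    · rw [h]; ring
    · rw [h, hdur0 c h]; ring
  have hTM : (∑ m, p.v m * (M.w m - ∑ k, M.a m k * p.np k))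
      = (∑ m, M.w m * p.v m) - ∑ m, p.v m * ∑ k, M.a m k * p.np k := by
    rw [← Finset.sum_sub_distrib]
    exact Finset.sum_congr rfl fun m _ => by ring
  -- total slack equals duality gap
  have hT : (∑ i, p.sI i * (1 - p.x i))
      + (∑ i, p.x i * (p.sI i + M.PI i * p.price (M.ltI i) - M.PI i * M.lamI i))
      + (∑ h, p.sH h * (p.u (M.toC h) - p.xh h))
      + (∑ h, p.xh h * (p.sH h + M.PH h * p.price (M.ltH h) - M.PH h * M.lamH h))
      + (∑ j, p.sJ j * (1 - p.y j))
      + (∑ j, p.y j * (p.sJ j + p.dr j - p.da j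
          + ∑ lt, M.PJ j lt * (p.price lt - M.lamJ j)))
      + (∑ c, p.sC c * (1 - p.u c))
      + (∑ c, p.u c * (p.sC c + p.dur c - p.dua c
          - ∑ h, if M.toC h = c then p.sH h else 0))
      + (∑ m, p.v m * (M.w m - ∑ k, M.a m k * p.np k))
      = dualObjAdj M p - primalObj M p := by
    simp only [dualObjAdj, surplusSum, primalObj]
    linarith [hTI, hTH, hTJ, hTC, hTM, hE, hHC]
  -- nonnegativity of the nine sums
  have n1 : 0 ≤ ∑ i, p.sI i * (1 - p.x i) := Finset.sum_nonneg fun i _ => hAI i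
  have n2 : 0 ≤ ∑ i, p.x i * (p.sI i + M.PI i * p.price (M.ltI i) - M.PI i * M.lamI i) :=
    Finset.sum_nonneg fun i _ => hBI i
  have n3 : 0 ≤ ∑ h, p.sH h * (p.u (M.toC h) - p.xh h) :=
    Finset.sum_nonneg fun h _ => hAH h
  have n4 : 0 ≤ ∑ h, p.xh h * (p.sH h + M.PH h * p.price (M.ltH h) - M.PH h * M.lamH h) :=
    Finset.sum_nonneg fun h _ => hBH h
  have n5 : 0 ≤ ∑ j, p.sJ j * (1 - p.y j) := Finset.sum_nonneg fun j _ => hAJ j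
  have n6 : 0 ≤ ∑ j, p.y j * (p.sJ j + p.dr j - p.da j
      + ∑ lt, M.PJ j lt * (p.price lt - M.lamJ j)) :=
    Finset.sum_nonneg fun j _ => hBJ j
  have n7 : 0 ≤ ∑ c, p.sC c * (1 - p.u c) := Finset.sum_nonneg fun c _ => hAC c
  have n8 : 0 ≤ ∑ c, p.u c * (p.sC c + p.dur c - p.dua c
      - ∑ h, if M.toC h = c then p.sH h else 0) :=
    Finset.sum_nonneg fun c _ => hBC c
  have n9 : 0 ≤ ∑ m, p.v m * (M.w m - ∑ k, M.a m k * p.np k) :=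
    Finset.sum_nonneg fun m _ => hAM m
  have heq : primalObj M p = dualObjAdj M p := by linarith
  have z1 : ∑ i, p.sI i * (1 - p.x i) = 0 := by linarith
  have z2 : ∑ i, p.x i * (p.sI i + M.PI i * p.price (M.ltI i) - M.PI i * M.lamI i) = 0 := by
    linarith
  have z3 : ∑ h, p.sH h * (p.u (M.toC h) - p.xh h) = 0 := by linarith
  have z4 : ∑ h, p.xh h * (p.sH h + M.PH h * p.price (M.ltH h) - M.PH h * M.lamH h) = 0 := by
    linarith
  have z5 : ∑ j, p.sJ j * (1 - p.y j) = 0 := by linarith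
  have z6 : ∑ j, p.y j * (p.sJ j + p.dr j - p.da j
      + ∑ lt, M.PJ j lt * (p.price lt - M.lamJ j)) = 0 := by linarith
  have z7 : ∑ c, p.sC c * (1 - p.u c) = 0 := by linarith
  have z8 : ∑ c, p.u c * (p.sC c + p.dur c - p.dua c
      - ∑ h, if M.toC h = c then p.sH h else 0) = 0 := by linarith
  have z9 : ∑ m, p.v m * (M.w m - ∑ k, M.a m k * p.np k) = 0 := by linarith
  refine ⟨hdr0, hda0, hdur0, heq, ?_, ?_, ?_, ?_, ?_, ?_, ?_, ?_, ?_, ?_, ?_, ?_, ?_⟩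
  · exact fun i => (Finset.sum_eq_zero_iff_of_nonneg (fun i _ => hAI i)).mp z1 i (Finset.mem_univ i)
  · exact fun j => (Finset.sum_eq_zero_iff_of_nonneg (fun j _ => hAJ j)).mp z5 j (Finset.mem_univ j)
  · exact fun h => (Finset.sum_eq_zero_iff_of_nonneg (fun h _ => hAH h)).mp z3 h (Finset.mem_univ h)
  · exact fun c => (Finset.sum_eq_zero_iff_of_nonneg (fun c _ => hAC c)).mp z7 c (Finset.mem_univ c)
  · exact fun m => (Finset.sum_eq_zero_iff_of_nonneg (fun m _ => hAM m)).mp z9 m (Finset.mem_univ m)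
  · intro j
    rcases hyI j with h | h
    · rw [hda0 j h]; ring
    · rw [h]; ring
  · intro j
    rcases hyI j with h | h
    · rw [h]; ring
    · rw [hdr0 j h]; ring
  · intro c
    rw [bm4 c]; ring
  · intro c
    rcases huI c with h | h
    · rw [h]; ring
    · rw [hdur0 c h]; ring
  · exact fun i => (Finset.sum_eq_zero_iff_of_nonneg (fun i _ => hBI i)).mp z2 i (Finset.mem_univ i)
  · exact fun h => (Finset.sum_eq_zero_iff_of_nonneg (fun h _ => hBH h)).mp z4 h (Finset.mem_univ h)
  · exact fun j => (Finset.sum_eq_zero_iff_of_nonneg (fun j _ => hBJ j)).mp z6 j (Finset.mem_univ j)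
  · exact fun c => (Finset.sum_eq_zero_iff_of_nonneg (fun c _ => hBC c)).mp z8 c (Finset.mem_univ c)
end

section
/- Theorem 1 (II), lifting direction: any point (x, y, u, n, π, v, s, d^a_{j∈J_a}, d^r_{j∈J_r}, du^a_{c∈C_a}, du^r_{c∈C_r}) satisfying primal feasibility, dual feasibility, and all complementarity conditions for a given block selection J = J_r ∪ J_a and MIC selection C = C_r ∪ C_a, with prices in [−π̄, π̄], can be extended—by setting d^r_j := 0 for j ∈ J_a, d^a_j := 0 for j ∈ J_r, du^a_c := 0 for all c, du^r_c := 0 for c ∈ C_a, and redefining d^r_{j_r} := Σ_t P^t_{j_r}(λ^{j_r} − π_{l(j_r),t}) and suitably shifting (s_{j_a}, d^a_{j_a}) preserving their difference—into a feasible point of UMFS, provided the big-M constants satisfy M_j ≥ 2π̄·Σ_t |P^t_j| (and analogously for M_c). -/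
open Finset

variable {nI nJ nC nH nLT nK nM : ℕ}

/-- Dispatch of the fixed-selection dual multipliers: only `dᵃ` (resp. `duᵃ`) for
accepted bids and `dʳ` (resp. `duʳ`) for rejected bids are present. -/
def FixedDualDispatch (p : Point nI nJ nC nH nLT nK nM) : Prop :=
  (∀ j, p.y j = 1 → p.dr j = 0) ∧ (∀ j, p.y j = 0 → p.da j = 0) ∧
  (∀ c, p.u c = 1 → p.dur c = 0) ∧ (∀ c, p.u c = 0 → p.dua c = 0)

/-- Theorem 1 (II), lifting direction: any primal-dual point satisfying primal
feasibility, dual feasibility and all complementarity conditions for a given block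
and MIC selection, with prices and limit prices in `[−π̄, π̄]`, can be lifted
(keeping its primal part, prices and network duals) to a feasible point of UMFS,
provided the big-M constants satisfy `M_j ≥ 2π̄ Σ_t |Pᵗ_j|` and analogously for `M_c`. -/
theorem stmt12 (M : Market nI nJ nC nH nLT nK nM) (MJ : Fin nJ → ℝ) (MC : Fin nC → ℝ)
    (pibar : ℝ) (p : Point nI nJ nC nH nLT nK nM)
    (hprimal : PrimalFeas M p) (hint : Integral p)
    (hdual : DualFeas M p) (hdisp : FixedDualDispatch p)
    (hcs : CompSlack M p)
    (hprice : ∀ lt, |p.price lt| ≤ pibar)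
    (hlamJ : ∀ j, |M.lamJ j| ≤ pibar) (hlamH : ∀ h, |M.lamH h| ≤ pibar)
    (hMJ : ∀ j, 2 * pibar * ∑ lt, |M.PJ j lt| ≤ MJ j)
    (hMC : ∀ c, 2 * pibar * ∑ h, (if M.toC h = c then |M.PH h| else 0) ≤ MC c) :
    ∃ q : Point nI nJ nC nH nLT nK nM,
      UMFS M MJ MC q ∧
      q.x = p.x ∧ q.xh = p.xh ∧ q.y = p.y ∧ q.u = p.u ∧
      q.np = p.np ∧ q.price = p.price ∧ q.v = p.v := by
  obtain ⟨hx, hy, hxh, hu, hbal, hnet⟩ := hprimal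
  obtain ⟨hiy, hiu⟩ := hint
  obtain ⟨hsI, hsJ0, hsC0, hsH0, hdad, hdud, hv0, hfI, hfH, hfJ, hfC, hfK⟩ := hdual
  obtain ⟨cs1, cs2, cs3, cs4, cs5, cs6, cs7, cs8, cs9, cs10, cs11, cs12, cs13⟩ := hcs
  -- reduced profit of block j
  set R : Fin nJ → ℝ := fun j => ∑ lt, M.PJ j lt * (M.lamJ j - p.price lt) with hR
  -- new hourly suborder surpluses
  set sH' : Fin nH → ℝ := fun h =>
    if p.u (M.toC h) = 0 then max (M.PH h * (M.lamH h - p.price (M.ltH h))) 0 else p.sH h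
    with hsH'
  have habsJ : ∀ j, |R j| ≤ MJ j := by
    intro j
    calc |R j| ≤ ∑ lt, |M.PJ j lt * (M.lamJ j - p.price lt)| :=
          Finset.abs_sum_le_sum_abs _ _
      _ ≤ ∑ lt, |M.PJ j lt| * (2 * pibar) := by
          refine Finset.sum_le_sum fun lt _ => ?_
          rw [abs_mul]
          refine mul_le_mul_of_nonneg_left ?_ (abs_nonneg _)
          calc |M.lamJ j - p.price lt| ≤ |M.lamJ j| + |p.price lt| := abs_sub _ _
            _ ≤ pibar + pibar := add_le_add (hlamJ j) (hprice lt)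
            _ = 2 * pibar := by ring
      _ = 2 * pibar * ∑ lt, |M.PJ j lt| := by rw [Finset.mul_sum]; exact Finset.sum_congr rfl fun lt _ => by ring
      _ ≤ MJ j := hMJ j
  have habsH : ∀ h, |M.PH h * (M.lamH h - p.price (M.ltH h))| ≤ 2 * pibar * |M.PH h| := by
    intro h
    rw [abs_mul, mul_comm (2 * pibar)]
    refine mul_le_mul_of_nonneg_left ?_ (abs_nonneg _)
    calc |M.lamH h - p.price (M.ltH h)| ≤ |M.lamH h| + |p.price (M.ltH h)| := abs_sub _ _
      _ ≤ pibar + pibar := add_le_add (hlamH h) (hprice _)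
      _ = 2 * pibar := by ring
  have hsH'nn : ∀ h, 0 ≤ sH' h := by
    intro h; rw [hsH']; dsimp only
    split
    · exact le_max_right _ _
    · exact hsH0 h
  have hsH'feas : ∀ h, sH' h + M.PH h * p.price (M.ltH h) ≥ M.PH h * M.lamH h := by
    intro h; rw [hsH']; dsimp only
    split
    · have := le_max_left (M.PH h * (M.lamH h - p.price (M.ltH h))) 0
      nlinarith
    · exact hfH h
  -- the lifted point
  refine ⟨⟨p.x, p.xh, p.y, p.u, p.np, p.price, p.v, p.sI,
      (fun j => if p.y j = 0 then 0 else max (R j) 0),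
      (fun c => if p.u c = 0 then 0 else ∑ h, if M.toC h = c then p.sH h else 0),
      sH',
      (fun j => if p.y j = 0 then 0 else max (-(R j)) 0),
      (fun j => if p.y j = 0 then max (R j) 0 else 0),
      (fun _ => 0),
      (fun c => if p.u c = 0 then ∑ h, if M.toC h = c then sH' h else 0 else 0)⟩,
    ?_, rfl, rfl, rfl, rfl, rfl, rfl, rfl⟩
  have hRsplit : ∀ j, R j = (∑ lt, M.PJ j lt * M.lamJ j) - ∑ lt, M.PJ j lt * p.price lt := by
    intro j; rw [hR]; dsimp only
    rw [← Finset.sum_sub_distrib]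
    exact Finset.sum_congr rfl fun lt _ => by ring
  refine ⟨⟨hx, hy, hxh, hu, hbal, hnet⟩, ⟨hiy, hiu⟩, ?_, ?_, ?_⟩
  · -- Dual feasibility
    refine ⟨hsI, ?_, ?_, hsH'nn, ?_, ?_, hv0, hfI, hsH'feas, ?_, ?_, hfK⟩
    · intro j; dsimp only; split
      · exact le_refl 0
      · exact le_max_right _ _
    · intro c; dsimp only; split
      · exact le_refl 0
      · exact Finset.sum_nonneg fun h _ => by split <;> [exact hsH0 h; exact le_refl 0]
    · intro j; dsimp only
      constructor <;> (split <;> first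
        | exact le_refl 0
        | exact le_max_right _ _)
    · intro c; dsimp only
      refine ⟨le_refl 0, ?_⟩
      split
      · exact Finset.sum_nonneg fun h _ => by split <;> [exact hsH'nn h; exact le_refl 0]
      · exact le_refl 0
    · intro j; dsimp only
      have := hRsplit j
      rcases hiy j with h0 | h1
      · rw [if_pos h0, if_pos h0, if_pos h0]
        have := le_max_left (R j) 0
        linarith
      · have hne : ¬ p.y j = 0 := by rw [h1]; norm_num
        rw [if_neg hne, if_neg hne, if_neg hne]
        rcases le_total (R j) 0 with hle | hle
        · rw [max_eq_right hle, max_eq_left (by linarith : (0:ℝ) ≤ -(R j))]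
          linarith
        · rw [max_eq_left hle, max_eq_right (by linarith : -(R j) ≤ 0)]
          linarith
    · intro c; dsimp only
      rcases hiu c with h0 | h1
      · rw [if_pos h0, if_pos h0]
        have : (∑ h, if M.toC h = c then sH' h else 0) = ∑ h, if M.toC h = c then sH' h else 0 := rfl
        linarith [this]
      · have hne : ¬ p.u c = 0 := by rw [h1]; norm_num
        rw [if_neg hne, if_neg hne]
        have hEq : (∑ h, if M.toC h = c then sH' h else 0)
            = ∑ h, if M.toC h = c then p.sH h else 0 := by
          refine Finset.sum_congr rfl fun h _ => ?_
          by_cases htc : M.toC h = c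
          · rw [if_pos htc, if_pos htc, hsH']; dsimp only
            rw [if_neg (by rw [htc, h1]; norm_num)]
          · rw [if_neg htc, if_neg htc]
        rw [hEq]
        linarith
  · -- Big-M dispatch
    refine ⟨?_, ?_, ?_, fun c => rfl⟩
    · intro j; dsimp only
      rcases hiy j with h0 | h1
      · rw [if_pos h0, h0]
        have h1 := habsJ j
        have h2 := le_abs_self (R j)
        have h3 := le_max_left (R j) 0
        have h4 : max (R j) 0 ≤ |R j| := max_le (le_abs_self _) (abs_nonneg _)
        linarith
      · have hne : ¬ p.y j = 0 := by rw [h1]; norm_num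
        rw [if_neg hne, h1]
        have : (0:ℝ) ≤ MJ j := le_trans (abs_nonneg _) (habsJ j)
        linarith
    · intro j; dsimp only
      rcases hiy j with h0 | h1
      · rw [if_pos h0, h0]
        have : (0:ℝ) ≤ MJ j := le_trans (abs_nonneg _) (habsJ j)
        linarith
      · have hne : ¬ p.y j = 0 := by rw [h1]; norm_num
        rw [if_neg hne, h1]
        have h4 : max (-(R j)) 0 ≤ |R j| := by
          rw [← abs_neg]
          exact max_le (le_abs_self _) (abs_nonneg _)
        have := habsJ j
        linarith
    · intro c; dsimp only
      rcases hiu c with h0 | h1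
      · rw [if_pos h0, h0]
        calc (∑ h, if M.toC h = c then sH' h else 0)
            ≤ ∑ h, (if M.toC h = c then 2 * pibar * |M.PH h| else 0) := by
              refine Finset.sum_le_sum fun h _ => ?_
              by_cases htc : M.toC h = c
              · rw [if_pos htc, if_pos htc, hsH']; dsimp only
                rw [if_pos (by rw [htc, h0])]
                exact le_trans (max_le (le_abs_self _) (abs_nonneg _)) (habsH h)
              · rw [if_neg htc, if_neg htc]
          _ = 2 * pibar * ∑ h, (if M.toC h = c then |M.PH h| else 0) := by
              rw [Finset.mul_sum]
              exact Finset.sum_congr rfl fun h _ => by split <;> ring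
          _ ≤ MC c := hMC c
          _ = MC c * (1 - 0) := by ring
      · have hne : ¬ p.u c = 0 := by rw [h1]; norm_num
        rw [if_neg hne, h1]
        norm_num
  · -- objective inequality: in fact equality
    have E1 : ∀ i, p.sI i = M.PI i * (M.lamI i - p.price (M.ltI i)) * p.x i := by
      intro i
      linear_combination cs1 i + cs10 i
    have E2 : ∀ h, p.u (M.toC h) * p.sH h
        = M.PH h * (M.lamH h - p.price (M.ltH h)) * p.xh h := by
      intro h
      rcases hiu (M.toC h) with h0 | h1
      · have hxh0 : p.xh h = 0 := le_antisymm (by rw [← h0]; exact (hxh h).2) (hxh h).1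
        rw [h0, hxh0]; ring
      · rw [h1]
        have c3 := cs3 h
        rw [h1] at c3
        linear_combination c3 + cs11 h
    have E4 : ∑ m, M.w m * p.v m
        = ∑ lt, p.price lt *
            ((∑ i, if M.ltI i = lt then M.PI i * p.x i else 0)
             + (∑ j, M.PJ j lt * p.y j)
             + (∑ h, if M.ltH h = lt then M.PH h * p.xh h else 0)) := by
      calc ∑ m, M.w m * p.v m = ∑ m, p.v m * ∑ k, M.a m k * p.np k := by
            refine Finset.sum_congr rfl fun m _ => ?_
            linear_combination cs5 m
        _ = ∑ m, ∑ k, M.a m k * p.v m * p.np k := by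
            refine Finset.sum_congr rfl fun m _ => ?_
            rw [Finset.mul_sum]
            exact Finset.sum_congr rfl fun k _ => by ring
        _ = ∑ k, ∑ m, M.a m k * p.v m * p.np k := Finset.sum_comm
        _ = ∑ k, p.np k * ∑ m, M.a m k * p.v m := by
            refine Finset.sum_congr rfl fun k _ => ?_
            rw [Finset.mul_sum]
            exact Finset.sum_congr rfl fun m _ => by ring
        _ = ∑ k, p.np k * ∑ lt, M.e k lt * p.price lt := by
            refine Finset.sum_congr rfl fun k _ => ?_
            have := hfK k
            have h2 : (∑ m, M.a m k * p.v m) = ∑ lt, M.e k lt * p.price lt := by linarith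
            rw [h2]
        _ = ∑ k, ∑ lt, M.e k lt * p.price lt * p.np k := by
            refine Finset.sum_congr rfl fun k _ => ?_
            rw [Finset.mul_sum]
            exact Finset.sum_congr rfl fun lt _ => by ring
        _ = ∑ lt, ∑ k, M.e k lt * p.price lt * p.np k := Finset.sum_comm
        _ = ∑ lt, p.price lt * ∑ k, M.e k lt * p.np k := by
            refine Finset.sum_congr rfl fun lt _ => ?_
            rw [Finset.mul_sum]
            exact Finset.sum_congr rfl fun k _ => by ring
        _ = _ := by
            refine Finset.sum_congr rfl fun lt _ => ?_
            rw [← hbal lt]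
    -- now assemble
    dsimp only [primalObj, dualObjAdj, surplusSum]
    have SJ : (∑ j, if p.y j = 0 then 0 else max (R j) 0)
        - (∑ j, if p.y j = 0 then 0 else max (-(R j)) 0)
        = ∑ j, p.y j * R j := by
      rw [← Finset.sum_sub_distrib]
      refine Finset.sum_congr rfl fun j _ => ?_
      rcases hiy j with h0 | h1
      · rw [if_pos h0, if_pos h0, h0]; ring
      · have hne : ¬ p.y j = 0 := by rw [h1]; norm_num
        rw [if_neg hne, if_neg hne, h1]
        rcases le_total (R j) 0 with hle | hle
        · rw [max_eq_right hle, max_eq_left (by linarith : (0:ℝ) ≤ -(R j))]; ring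
        · rw [max_eq_left hle, max_eq_right (by linarith : -(R j) ≤ 0)]; ring
    have SC : (∑ c, if p.u c = 0 then 0 else ∑ h, if M.toC h = c then p.sH h else 0)
        = ∑ h, M.PH h * (M.lamH h - p.price (M.ltH h)) * p.xh h := by
      have step1 : (∑ c, if p.u c = 0 then 0 else ∑ h, if M.toC h = c then p.sH h else 0)
          = ∑ c, ∑ h, if M.toC h = c then p.u c * p.sH h else 0 := by
        refine Finset.sum_congr rfl fun c _ => ?_
        rcases hiu c with h0 | h1
        · rw [if_pos h0]
          refine (Finset.sum_eq_zero fun h _ => ?_).symm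
          split
          · rw [h0]; ring
          · rfl
        · have hne : ¬ p.u c = 0 := by rw [h1]; norm_num
          rw [if_neg hne]
          refine Finset.sum_congr rfl fun h _ => ?_
          split
          · rw [h1]; ring
          · rfl
      rw [step1, Finset.sum_comm]
      refine Finset.sum_congr rfl fun h _ => ?_
      rw [Finset.sum_ite_eq Finset.univ (M.toC h) (fun c => p.u c * p.sH h),
        if_pos (Finset.mem_univ _)]
      exact E2 h
    rw [SC]
    have SI : (∑ i, p.sI i) = ∑ i, M.PI i * (M.lamI i - p.price (M.ltI i)) * p.x i :=
      Finset.sum_congr rfl fun i _ => E1 i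
    rw [SI, E4]
    have key : (∑ j, if p.y j = 0 then 0 else max (R j) 0)
        - (∑ j, if p.y j = 0 then 0 else max (-(R j)) 0) = ∑ j, p.y j * R j := SJ
    -- turn the goal into an equality-based inequality
    have expand1 : ∑ lt, p.price lt *
            ((∑ i, if M.ltI i = lt then M.PI i * p.x i else 0)
             + (∑ j, M.PJ j lt * p.y j)
             + (∑ h, if M.ltH h = lt then M.PH h * p.xh h else 0))
        = (∑ i, M.PI i * p.price (M.ltI i) * p.x i)
          + (∑ j, p.y j * ∑ lt, M.PJ j lt * p.price lt)
          + (∑ h, M.PH h * p.price (M.ltH h) * p.xh h) := by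
      have eI : ∑ lt, p.price lt * (∑ i, if M.ltI i = lt then M.PI i * p.x i else 0)
          = ∑ i, M.PI i * p.price (M.ltI i) * p.x i := by
        have : ∀ lt, p.price lt * (∑ i, if M.ltI i = lt then M.PI i * p.x i else 0)
            = ∑ i, if M.ltI i = lt then M.PI i * p.price lt * p.x i else 0 := by
          intro lt
          rw [Finset.mul_sum]
          refine Finset.sum_congr rfl fun i _ => ?_
          split <;> ring
        rw [Finset.sum_congr rfl fun lt _ => this lt, Finset.sum_comm]
        refine Finset.sum_congr rfl fun i _ => ?_
        rw [Finset.sum_ite_eq Finset.univ (M.ltI i) (fun lt => M.PI i * p.price lt * p.x i),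
          if_pos (Finset.mem_univ _)]
      have eH : ∑ lt, p.price lt * (∑ h, if M.ltH h = lt then M.PH h * p.xh h else 0)
          = ∑ h, M.PH h * p.price (M.ltH h) * p.xh h := by
        have : ∀ lt, p.price lt * (∑ h, if M.ltH h = lt then M.PH h * p.xh h else 0)
            = ∑ h, if M.ltH h = lt then M.PH h * p.price lt * p.xh h else 0 := by
          intro lt
          rw [Finset.mul_sum]
          refine Finset.sum_congr rfl fun h _ => ?_
          split <;> ring
        rw [Finset.sum_congr rfl fun lt _ => this lt, Finset.sum_comm]
        refine Finset.sum_congr rfl fun h _ => ?_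
        rw [Finset.sum_ite_eq Finset.univ (M.ltH h) (fun lt => M.PH h * p.price lt * p.xh h),
          if_pos (Finset.mem_univ _)]
      have eJ : ∑ lt, p.price lt * (∑ j, M.PJ j lt * p.y j)
          = ∑ j, p.y j * ∑ lt, M.PJ j lt * p.price lt := by
        have : ∀ lt, p.price lt * (∑ j, M.PJ j lt * p.y j)
            = ∑ j, M.PJ j lt * p.price lt * p.y j := by
          intro lt
          rw [Finset.mul_sum]
          refine Finset.sum_congr rfl fun j _ => ?_
          ring
        rw [Finset.sum_congr rfl fun lt _ => this lt, Finset.sum_comm]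
        refine Finset.sum_congr rfl fun j _ => ?_
        rw [Finset.mul_sum]
        refine Finset.sum_congr rfl fun lt _ => ?_
        ring
      calc ∑ lt, p.price lt *
            ((∑ i, if M.ltI i = lt then M.PI i * p.x i else 0)
             + (∑ j, M.PJ j lt * p.y j)
             + (∑ h, if M.ltH h = lt then M.PH h * p.xh h else 0))
          = (∑ lt, p.price lt * (∑ i, if M.ltI i = lt then M.PI i * p.x i else 0))
            + (∑ lt, p.price lt * (∑ j, M.PJ j lt * p.y j))
            + (∑ lt, p.price lt * (∑ h, if M.ltH h = lt then M.PH h * p.xh h else 0)) := by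
            rw [← Finset.sum_add_distrib, ← Finset.sum_add_distrib]
            refine Finset.sum_congr rfl fun lt _ => by ring
        _ = _ := by rw [eI, eH, eJ]
    rw [expand1]
    have final : (∑ i, M.PI i * (M.lamI i - p.price (M.ltI i)) * p.x i)
        + ((∑ j, if p.y j = 0 then 0 else max (R j) 0)
          - (∑ j, if p.y j = 0 then 0 else max (-(R j)) 0))
        + (∑ h, M.PH h * (M.lamH h - p.price (M.ltH h)) * p.xh h)
        + ((∑ i, M.PI i * p.price (M.ltI i) * p.x i)
          + (∑ j, p.y j * ∑ lt, M.PJ j lt * p.price lt)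
          + (∑ h, M.PH h * p.price (M.ltH h) * p.xh h))
        = ∑ i, M.lamI i * M.PI i * p.x i + ∑ h, M.lamH h * M.PH h * p.xh h
          + ∑ j, (∑ lt, M.lamJ j * M.PJ j lt) * p.y j := by
      rw [key]
      have jpart : (∑ j, p.y j * R j) + (∑ j, p.y j * ∑ lt, M.PJ j lt * p.price lt)
          = ∑ j, (∑ lt, M.lamJ j * M.PJ j lt) * p.y j := by
        rw [← Finset.sum_add_distrib]
        refine Finset.sum_congr rfl fun j _ => ?_
        rw [hRsplit j]
        have : (∑ lt, M.PJ j lt * M.lamJ j) = ∑ lt, M.lamJ j * M.PJ j lt :=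
          Finset.sum_congr rfl fun lt _ => by ring
        rw [← this]
        ring
      have ipart : (∑ i, M.PI i * (M.lamI i - p.price (M.ltI i)) * p.x i)
          + (∑ i, M.PI i * p.price (M.ltI i) * p.x i)
          = ∑ i, M.lamI i * M.PI i * p.x i := by
        rw [← Finset.sum_add_distrib]
        exact Finset.sum_congr rfl fun i _ => by ring
      have hpart : (∑ h, M.PH h * (M.lamH h - p.price (M.ltH h)) * p.xh h)
          + (∑ h, M.PH h * p.price (M.ltH h) * p.xh h)
          = ∑ h, M.lamH h * M.PH h * p.xh h := by
        rw [← Finset.sum_add_distrib]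
        exact Finset.sum_congr rfl fun h _ => by ring
      linarith [jpart, ipart, hpart]
    linarith [final]
end

section
/- Welfare decomposition (Theorem 2, part 1): for any feasible point of UMFS2 (UMFS together with the linearized MIC constraints), the welfare equals the sum of individual surpluses minus compensations paid to paradoxically accepted block bids: Σ_i (λ^i P_i) x_i + Σ_{c,h∈H_c} (λ^{hc} P_{hc}) x_{hc} + Σ_{j,t} (λ^j P^t_j) y_j = Σ_i s_i + Σ_j s_j + Σ_c s_c + Σ_m w_m v_m − Σ_{j∈J} d^a_j. -/
open Finset

variable {nI nJ nC nH nLT nK nM : ℕ}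

/-- Regrouping a sum according to the fibers of `g`. -/
lemma sum_fiber_swap {α β : Type*} [Fintype α] [Fintype β] [DecidableEq β]
    (g : α → β) (f : α → ℝ) (w : β → ℝ) :
    ∑ a, w (g a) * f a = ∑ b, w b * ∑ a, if g a = b then f a else 0 := by
  have : ∀ b : β, w b * ∑ a, (if g a = b then f a else 0)
      = ∑ a, (if g a = b then w b * f a else 0) := by
    intro b
    rw [Finset.mul_sum]
    exact Finset.sum_congr rfl fun a _ => by split <;> simp
  rw [Finset.sum_congr rfl fun b _ => this b, Finset.sum_comm]
  refine Finset.sum_congr rfl fun a _ => ?_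
  rw [Finset.sum_ite_eq (Finset.univ) (g a) (fun b => w b * f a)]
  simp

/-- Weak duality for UMFS. -/
lemma weak_duality (M : Market nI nJ nC nH nLT nK nM) (MJ : Fin nJ → ℝ) (MC : Fin nC → ℝ)
    (p : Point nI nJ nC nH nLT nK nM)
    (hP : PrimalFeas M p) (hI : Integral p) (hD : DualFeas M p)
    (hB : BigMDisp MJ MC p) :
    primalObj M p ≤ dualObjAdj M p := by
  obtain ⟨hx, hy, hxh, hu, hbal, hnet⟩ := hP
  obtain ⟨hIy, hIu⟩ := hI
  obtain ⟨hsI, hsJ, hsC, hsH, hd, hdu, hv, dI, dH, dJ, dC, dK⟩ := hD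
  obtain ⟨hdr, hda, hdur, hdua⟩ := hB
  -- pointwise products with dual constraints
  have h1 : ∑ i, M.lamI i * M.PI i * p.x i
      ≤ ∑ i, (p.sI i * p.x i + M.PI i * p.price (M.ltI i) * p.x i) := by
    refine Finset.sum_le_sum fun i _ => ?_
    nlinarith [mul_le_mul_of_nonneg_right (dI i) (hx i).1]
  have h2 : ∑ h, M.lamH h * M.PH h * p.xh h
      ≤ ∑ h, (p.sH h * p.xh h + M.PH h * p.price (M.ltH h) * p.xh h) := by
    refine Finset.sum_le_sum fun h _ => ?_
    nlinarith [mul_le_mul_of_nonneg_right (dH h) (hxh h).1]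
  have h3 : ∑ j, (∑ lt, M.lamJ j * M.PJ j lt) * p.y j
      ≤ ∑ j, ((p.sJ j + p.dr j - p.da j) * p.y j
              + (∑ lt, M.PJ j lt * p.price lt) * p.y j) := by
    refine Finset.sum_le_sum fun j _ => ?_
    have h0 := mul_le_mul_of_nonneg_right (dJ j) (hy j).1
    have h' : (∑ lt, M.lamJ j * M.PJ j lt) = ∑ lt, M.PJ j lt * M.lamJ j := by
      exact Finset.sum_congr rfl fun lt _ => by ring
    rw [h']
    calc (∑ lt, M.PJ j lt * M.lamJ j) * p.y j
        ≤ (p.sJ j + p.dr j - p.da j + ∑ lt, M.PJ j lt * p.price lt) * p.y j := h0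
      _ = (p.sJ j + p.dr j - p.da j) * p.y j
            + (∑ lt, M.PJ j lt * p.price lt) * p.y j := by ring
  -- network / price-weighted part
  have hnetkey :
      (∑ i, M.PI i * p.price (M.ltI i) * p.x i)
      + (∑ h, M.PH h * p.price (M.ltH h) * p.xh h)
      + (∑ j, (∑ lt, M.PJ j lt * p.price lt) * p.y j)
      ≤ ∑ m, M.w m * p.v m := by
    have e1 : ∑ i, M.PI i * p.price (M.ltI i) * p.x i
        = ∑ lt, p.price lt * ∑ i, if M.ltI i = lt then M.PI i * p.x i else 0 := by
      rw [← sum_fiber_swap (M.ltI) (fun i => M.PI i * p.x i) p.price]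
      exact Finset.sum_congr rfl fun i _ => by ring
    have e2 : ∑ h, M.PH h * p.price (M.ltH h) * p.xh h
        = ∑ lt, p.price lt * ∑ h, if M.ltH h = lt then M.PH h * p.xh h else 0 := by
      rw [← sum_fiber_swap (M.ltH) (fun h => M.PH h * p.xh h) p.price]
      exact Finset.sum_congr rfl fun h _ => by ring
    have e3 : ∑ j, (∑ lt, M.PJ j lt * p.price lt) * p.y j
        = ∑ lt, p.price lt * ∑ j, M.PJ j lt * p.y j := by
      rw [Finset.sum_congr rfl fun j _ => Finset.sum_mul _ _ _, Finset.sum_comm]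
      refine Finset.sum_congr rfl fun lt _ => ?_
      rw [Finset.mul_sum]
      exact Finset.sum_congr rfl fun j _ => by ring
    rw [e1, e2, e3, ← Finset.sum_add_distrib, ← Finset.sum_add_distrib]
    have ebal : ∑ lt, (p.price lt * ∑ i, (if M.ltI i = lt then M.PI i * p.x i else 0)
        + p.price lt * ∑ h, (if M.ltH h = lt then M.PH h * p.xh h else 0)
        + p.price lt * ∑ j, M.PJ j lt * p.y j)
        = ∑ lt, p.price lt * ∑ k, M.e k lt * p.np k := by
      refine Finset.sum_congr rfl fun lt _ => ?_
      rw [← hbal lt]; ring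
    rw [ebal]
    have eswap : ∑ lt, p.price lt * ∑ k, M.e k lt * p.np k
        = ∑ k, p.np k * ∑ lt, M.e k lt * p.price lt := by
      rw [Finset.sum_congr rfl fun lt _ => Finset.mul_sum _ _ _, Finset.sum_comm]
      refine Finset.sum_congr rfl fun k _ => ?_
      rw [Finset.mul_sum]
      exact Finset.sum_congr rfl fun lt _ => by ring
    rw [eswap]
    have edual : ∑ k, p.np k * ∑ lt, M.e k lt * p.price lt
        = ∑ m, p.v m * ∑ k, M.a m k * p.np k := by
      have : ∀ k, ∑ lt, M.e k lt * p.price lt = ∑ m, M.a m k * p.v m := by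
        intro k; linarith [dK k]
      rw [Finset.sum_congr rfl fun k _ => by rw [this k]]
      rw [Finset.sum_congr rfl fun k _ => Finset.mul_sum _ _ _, Finset.sum_comm]
      refine Finset.sum_congr rfl fun m _ => ?_
      rw [Finset.mul_sum]
      exact Finset.sum_congr rfl fun k _ => by ring
    rw [edual]
    refine Finset.sum_le_sum fun m _ => ?_
    calc p.v m * ∑ k, M.a m k * p.np k ≤ p.v m * M.w m :=
          mul_le_mul_of_nonneg_left (hnet m) (hv m)
      _ = M.w m * p.v m := by ring
  -- surplus bounds
  have hsIx : ∑ i, p.sI i * p.x i ≤ ∑ i, p.sI i := by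
    refine Finset.sum_le_sum fun i _ => ?_
    nlinarith [hsI i, (hx i).2]
  have hsHx : ∑ h, p.sH h * p.xh h ≤ ∑ c, p.sC c := by
    have step1 : ∑ h, p.sH h * p.xh h ≤ ∑ h, p.u (M.toC h) * p.sH h := by
      refine Finset.sum_le_sum fun h _ => ?_
      nlinarith [hsH h, (hxh h).2]
    have step2 : ∑ h, p.u (M.toC h) * p.sH h
        = ∑ c, p.u c * ∑ h, if M.toC h = c then p.sH h else 0 :=
      sum_fiber_swap (M.toC) p.sH p.u
    have step3 : ∑ c, p.u c * (∑ h, if M.toC h = c then p.sH h else 0)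
        ≤ ∑ c, p.u c * (p.sC c + p.dur c - p.dua c) := by
      refine Finset.sum_le_sum fun c _ => mul_le_mul_of_nonneg_left ?_ (hu c).1
      linarith [dC c]
    have step4 : ∑ c, p.u c * (p.sC c + p.dur c - p.dua c) ≤ ∑ c, p.sC c := by
      refine Finset.sum_le_sum fun c _ => ?_
      have hd0 : p.dua c = 0 := hdua c
      have hud : p.u c * p.dur c = 0 := by
        rcases hIu c with h0 | h1
        · rw [h0]; ring
        · have : p.dur c ≤ 0 := by have := hdur c; rw [h1] at this; linarith
          have : p.dur c = 0 := le_antisymm this (hdu c).2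
          rw [this]; ring
      nlinarith [hsC c, (hu c).2, (hu c).1]
    linarith
  have hsJy : ∑ j, (p.sJ j + p.dr j - p.da j) * p.y j ≤ ∑ j, p.sJ j - ∑ j, p.da j := by
    rw [← Finset.sum_sub_distrib]
    refine Finset.sum_le_sum fun j _ => ?_
    rcases hIy j with h0 | h1
    · have hda0 : p.da j = 0 := by
        have := hda j; rw [h0] at this
        exact le_antisymm (by linarith) (hd j).1
      rw [h0, hda0]; simp [hsJ j]
    · have hdr0 : p.dr j = 0 := by
        have := hdr j; rw [h1] at this
        exact le_antisymm (by linarith) (hd j).2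
      rw [h1, hdr0]; ring_nf; simp
  -- assemble
  unfold primalObj dualObjAdj surplusSum
  calc ∑ i, M.lamI i * M.PI i * p.x i + ∑ h, M.lamH h * M.PH h * p.xh h
        + ∑ j, (∑ lt, M.lamJ j * M.PJ j lt) * p.y j
      ≤ (∑ i, (p.sI i * p.x i + M.PI i * p.price (M.ltI i) * p.x i))
        + (∑ h, (p.sH h * p.xh h + M.PH h * p.price (M.ltH h) * p.xh h))
        + (∑ j, ((p.sJ j + p.dr j - p.da j) * p.y j
              + (∑ lt, M.PJ j lt * p.price lt) * p.y j)) := by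
        exact add_le_add (add_le_add h1 h2) h3
    _ = (∑ i, p.sI i * p.x i) + (∑ h, p.sH h * p.xh h)
        + (∑ j, (p.sJ j + p.dr j - p.da j) * p.y j)
        + ((∑ i, M.PI i * p.price (M.ltI i) * p.x i)
          + (∑ h, M.PH h * p.price (M.ltH h) * p.xh h)
          + (∑ j, (∑ lt, M.PJ j lt * p.price lt) * p.y j)) := by
        rw [Finset.sum_add_distrib, Finset.sum_add_distrib, Finset.sum_add_distrib]; ring
    _ ≤ (∑ i, p.sI i) + (∑ c, p.sC c) + (∑ j, p.sJ j - ∑ j, p.da j)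
        + ∑ m, M.w m * p.v m := by
        exact add_le_add (add_le_add (add_le_add hsIx hsHx) hsJy) hnetkey
    _ = ∑ i, p.sI i + ∑ j, p.sJ j + ∑ c, p.sC c + ∑ m, M.w m * p.v m - ∑ j, p.da j := by
        ring

/-- Theorem 2, part 1 (welfare decomposition): for any feasible point of UMFS2 (UMFS
together with the linearized MIC constraints), the welfare equals the sum of the
individual surpluses and congestion rents minus the compensations paid to
paradoxically accepted block bids. -/
theorem stmt14 (M : Market nI nJ nC nH nLT nK nM) (MJ : Fin nJ → ℝ) (MC : Fin nC → ℝ)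
    (F V : Fin nC → ℝ) (p : Point nI nJ nC nH nLT nK nM)
    (hp : UMFS2 M MJ MC F V p) :
    primalObj M p
      = ∑ i, p.sI i + ∑ j, p.sJ j + ∑ c, p.sC c + ∑ m, M.w m * p.v m - ∑ j, p.da j := by
  obtain ⟨⟨hP, hI, hD, hB, hObj⟩, _⟩ := hp
  have hle := weak_duality M MJ MC p hP hI hD hB
  have : primalObj M p = dualObjAdj M p := le_antisymm hle hObj
  rw [this]; unfold dualObjAdj surplusSum; ring
end
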